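/- Let G = (V,E) be a finite simple graph with |V| = n and E nonempty, let L be its unweighted Laplacian with eigenvalues λ_1 ≤ λ_2 ≤ … ≤ λ_n, and let z ∈ ℝ^n satisfy 𝟙^T z = 0. Then for every integer R ≥ 1, the average over all sequences of R edges of the squared norm of the corresponding gossip product satisfies (1/|E|^R) Σ_{(e_1,…,e_R)∈E^R} ‖W_{e_R} ⋯ W_{e_1} z‖₂² ≤ (1 − λ_2/(2|E|))^R · ‖z‖₂². In other words, the expected squared deviation of randomized gossip from consensus contracts by a factor of at least (1 − λ_2/(2|E|)) per uniformly random gossip step. -/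

import Mathlib

open scoped Matrix

/-- For an edge `e = {p, q}`, the gossip matrix `W_e = I − (1/2)(e_p − e_q)(e_p − e_q)ᵀ`,
where `e_v` is the standard basis vector of vertex `v`. -/
noncomputable def gossip (n : ℕ) (e : Sym2 (Fin n)) : Matrix (Fin n) (Fin n) ℝ :=
  Sym2.lift
    ⟨fun p q => 1 - (1 / 2 : ℝ) •
        Matrix.vecMulVec (Pi.single p 1 - Pi.single q 1) (Pi.single p 1 - Pi.single q 1),
      by
        intro p q
        ext i j
        simp [Matrix.vecMulVec_apply]
        ring⟩ e

lemma gossip_mulVec (n : ℕ) (p q : Fin n) (y : Fin n → ℝ) (i : Fin n) :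
    (gossip n s(p, q) *ᵥ y) i
      = y i - (y p - y q) / 2 * ((Pi.single p 1 - Pi.single q 1 : Fin n → ℝ) i) := by
  simp only [gossip, Sym2.lift_mk, Matrix.sub_mulVec, Matrix.one_mulVec,
    Matrix.smul_mulVec, Pi.sub_apply, Pi.smul_apply, smul_eq_mul]
  have : (Matrix.vecMulVec (Pi.single p 1 - Pi.single q 1)
      (Pi.single p 1 - Pi.single q 1) *ᵥ y) i
      = ((Pi.single p 1 - Pi.single q 1 : Fin n → ℝ) ⬝ᵥ y) *
        ((Pi.single p 1 - Pi.single q 1 : Fin n → ℝ) i) := by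
    simp [Matrix.mulVec, Matrix.vecMulVec_apply, dotProduct, Finset.mul_sum, mul_assoc]
    rw [Finset.sum_mul]
    exact Finset.sum_congr rfl (fun x _ => by ring)
  rw [this]
  have hdot : (Pi.single p 1 - Pi.single q 1 : Fin n → ℝ) ⬝ᵥ y = y p - y q := by
    simp [dotProduct, Pi.single_apply, sub_mul, Finset.sum_sub_distrib]
  rw [hdot]
  simp only [Pi.sub_apply]
  ring

lemma sum_sq_gossip (n : ℕ) (p q : Fin n) (hpq : p ≠ q) (y : Fin n → ℝ) :
    ∑ i, (gossip n s(p,q) *ᵥ y) i ^ 2 = ∑ i, y i ^ 2 - (y p - y q)^2 / 2 := by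
  have h1 : ∑ i, ((Pi.single p 1 - Pi.single q 1 : Fin n → ℝ) i) * y i = y p - y q := by
    simp [Pi.single_apply, sub_mul, Finset.sum_sub_distrib]
  have h2 : ∑ i, ((Pi.single p 1 - Pi.single q 1 : Fin n → ℝ) i)^2 = 2 := by
    have h : ∀ i, ((Pi.single p 1 - Pi.single q 1 : Fin n → ℝ) i)^2
        = (if i = p then (1:ℝ) else 0) + (if i = q then 1 else 0) := by
      intro i
      by_cases hip : i = p <;> by_cases hiq : i = q <;>
        simp_all [Pi.single_apply]
    rw [Finset.sum_congr rfl fun i _ => h i, Finset.sum_add_distrib]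
    simp
    norm_num
  calc ∑ i, (gossip n s(p,q) *ᵥ y) i ^ 2
      = ∑ i, (y i ^2 - (y p - y q) * (((Pi.single p 1 - Pi.single q 1 : Fin n → ℝ) i) * y i)
          + ((y p - y q)/2)^2 * ((Pi.single p 1 - Pi.single q 1 : Fin n → ℝ) i)^2) := by
        refine Finset.sum_congr rfl fun i _ => ?_
        rw [gossip_mulVec]; ring
    _ = ∑ i, y i^2 - (y p - y q) * (y p - y q) + ((y p - y q)/2)^2 * 2 := by
        rw [Finset.sum_add_distrib, Finset.sum_sub_distrib, ← Finset.mul_sum, ← Finset.mul_sum,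
          h1, h2]
    _ = ∑ i, y i ^2 - (y p - y q)^2/2 := by ring

lemma sum_gossip_mulVec (n : ℕ) (e : Sym2 (Fin n)) (y : Fin n → ℝ) :
    ∑ i, (gossip n e *ᵥ y) i = ∑ i, y i := by
  induction e using Sym2.ind with
  | _ p q =>
    rw [Finset.sum_congr rfl fun i _ => gossip_mulVec n p q y i]
    rw [Finset.sum_sub_distrib, ← Finset.mul_sum]
    simp [Pi.single_apply, Finset.sum_sub_distrib]

lemma edge_sum_bridge (n : ℕ) (G : SimpleGraph (Fin n)) [DecidableRel G.Adj]
    (F : Sym2 (Fin n) → ℝ) :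
    ∑ i, ∑ j, (if G.Adj i j then F s(i, j) else 0) = 2 * ∑ e ∈ G.edgeFinset, F e := by
  classical
  rw [← Finset.sum_product']
  rw [← Finset.sum_filter]
  rw [← Finset.sum_fiberwise_of_maps_to (g := fun p : Fin n × Fin n => s(p.1, p.2))
      (t := G.edgeFinset) (fun p hp => by
        simp only [Finset.mem_filter] at hp
        exact SimpleGraph.mem_edgeFinset.2 hp.2)]
  rw [Finset.mul_sum]
  refine Finset.sum_congr rfl fun e he => ?_
  induction e using Sym2.ind with
  | _ u v =>
    have huv : G.Adj u v := SimpleGraph.mem_edgeFinset.1 he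
    have hfib : ((Finset.univ ×ˢ Finset.univ).filter (fun p : Fin n × Fin n => G.Adj p.1 p.2)).filter
        (fun p => s(p.1, p.2) = s(u, v)) = {(u, v), (v, u)} := by
      ext ⟨a, b⟩
      simp only [Finset.mem_filter, Finset.mem_product, Finset.mem_univ, true_and,
        Finset.mem_insert, Finset.mem_singleton, Sym2.eq_iff, Prod.mk.injEq]
      constructor
      · rintro ⟨-, (⟨rfl, rfl⟩ | ⟨rfl, rfl⟩)⟩
        · exact Or.inl ⟨rfl, rfl⟩
        · exact Or.inr ⟨rfl, rfl⟩
      · rintro (⟨rfl, rfl⟩ | ⟨rfl, rfl⟩)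
        · exact ⟨huv, Or.inl ⟨rfl, rfl⟩⟩
        · exact ⟨huv.symm, Or.inr ⟨rfl, rfl⟩⟩
    rw [hfib, Finset.sum_pair (by simp [huv.ne, Prod.ext_iff] : ((u,v) : Fin n × Fin n) ≠ (v,u))]
    rw [show s(v, u) = s(u, v) from Sym2.eq_swap]
    ring

lemma edgeQ_sum (n : ℕ) (G : SimpleGraph (Fin n)) [DecidableRel G.Adj] (y : Fin n → ℝ) :
    ∑ e ∈ G.edgeFinset,
        Sym2.lift ⟨fun p q => (y p - y q)^2, by intros; ring⟩ e
      = y ⬝ᵥ (G.lapMatrix ℝ *ᵥ y) := by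
  have h := G.lapMatrix_toLinearMap₂' ℝ y
  rw [Matrix.toLinearMap₂'_apply'] at h
  rw [h]
  have hb := edge_sum_bridge n G (Sym2.lift ⟨fun p q => (y p - y q)^2, by intros; ring⟩)
  simp only [Sym2.lift_mk] at hb
  rw [hb]
  ring

lemma spectral_lb (n : ℕ) (hn : 2 ≤ n) (G : SimpleGraph (Fin n)) [DecidableRel G.Adj]
    (hL : (G.lapMatrix ℝ).IsHermitian)
    (μ : Fin n → ℝ) (hmono : Monotone μ) (σ : Equiv.Perm (Fin n))
    (hμ : μ = hL.eigenvalues ∘ σ)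
    (y : Fin n → ℝ) (hy : ∑ i, y i = 0) :
    μ ⟨1, by omega⟩ * ∑ i, y i ^ 2 ≤ y ⬝ᵥ (G.lapMatrix ℝ *ᵥ y) := by
  classical
  set toE : (Fin n → ℝ) → EuclideanSpace ℝ (Fin n) := fun x => WithLp.toLp 2 x with htoE
  have happ : ∀ (x : Fin n → ℝ) (i : Fin n), toE x i = x i := fun _ _ => rfl
  have hinner : ∀ x w : Fin n → ℝ, (inner ℝ (toE x) (toE w) : ℝ) = ∑ i, x i * w i := by
    intro x w
    rw [PiLp.inner_apply]
    simp [RCLike.inner_apply, starRingEnd_apply]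
    exact Finset.sum_congr rfl fun i _ => mul_comm _ _
  have hLsymm : (G.lapMatrix ℝ)ᵀ = G.lapMatrix ℝ := G.isSymm_lapMatrix (R := ℝ)
  have hBcoe : ∀ (i : Fin n), toE (fun j => hL.eigenvectorBasis i j) = hL.eigenvectorBasis i :=
    fun _ => rfl
  have hBmul : ∀ (i j : Fin n), (G.lapMatrix ℝ *ᵥ (fun k => hL.eigenvectorBasis i k)) j
      = hL.eigenvalues i * hL.eigenvectorBasis i j := by
    intro i j
    have h3 := congrFun (hL.mulVec_eigenvectorBasis i) j
    simpa [Matrix.mulVec, dotProduct] using h3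
  have hrepr : ∀ (x : Fin n → ℝ) (i : Fin n),
      hL.eigenvectorBasis.repr (toE (G.lapMatrix ℝ *ᵥ x)) i
        = hL.eigenvalues i * hL.eigenvectorBasis.repr (toE x) i := by
    intro x i
    rw [OrthonormalBasis.repr_apply_apply, OrthonormalBasis.repr_apply_apply]
    rw [← hBcoe i, hinner, hinner]
    calc ∑ j, hL.eigenvectorBasis i j * (G.lapMatrix ℝ *ᵥ x) j
        = ∑ j, (G.lapMatrix ℝ *ᵥ (fun k => hL.eigenvectorBasis i k)) j * x j := by
          simp only [Matrix.mulVec, dotProduct, Finset.mul_sum, Finset.sum_mul]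
          rw [Finset.sum_comm]
          refine Finset.sum_congr rfl fun j _ => Finset.sum_congr rfl fun k _ => ?_
          have hjk := congrFun (congrFun hLsymm k) j
          rw [Matrix.transpose_apply] at hjk
          rw [← hjk]; ring
      _ = hL.eigenvalues i * ∑ j, hL.eigenvectorBasis i j * x j := by
          rw [Finset.mul_sum]
          exact Finset.sum_congr rfl fun j _ => by rw [hBmul]; ring
  set c : Fin n → ℝ := fun i => hL.eigenvectorBasis.repr (toE y) i with hc
  set d : Fin n → ℝ := fun i => hL.eigenvectorBasis.repr (toE (fun _ => 1)) i with hd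
  have hsum_sq : ∑ i, y i ^ 2 = ∑ i, c i ^ 2 := by
    have h := (hL.eigenvectorBasis.repr.inner_map_map (toE y) (toE y)).symm
    rw [hinner] at h
    rw [PiLp.inner_apply] at h
    simp only [RCLike.inner_apply, starRingEnd_apply, star_trivial] at h
    simpa [sq, hc] using h
  have hquad : y ⬝ᵥ (G.lapMatrix ℝ *ᵥ y) = ∑ i, hL.eigenvalues i * c i ^ 2 := by
    have h := (hL.eigenvectorBasis.repr.inner_map_map (toE y) (toE (G.lapMatrix ℝ *ᵥ y))).symm
    rw [hinner] at h
    rw [PiLp.inner_apply] at h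
    simp only [RCLike.inner_apply, starRingEnd_apply, star_trivial] at h
    have h2 : y ⬝ᵥ (G.lapMatrix ℝ *ᵥ y) = ∑ i, y i * (G.lapMatrix ℝ *ᵥ y) i := rfl
    rw [h2, h]
    refine Finset.sum_congr rfl fun i _ => ?_
    rw [hrepr]
    simp only [hc, sq]
    ring
  have hone : ∑ i, d i * c i = 0 := by
    have h := (hL.eigenvectorBasis.repr.inner_map_map (toE (fun _ => 1)) (toE y)).symm
    rw [hinner] at h
    rw [PiLp.inner_apply] at h
    simp only [RCLike.inner_apply, starRingEnd_apply, star_trivial] at h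
    simp only [one_mul, hy] at h
    simpa [hd, hc, mul_comm] using h.symm
  have hld : ∀ i, hL.eigenvalues i * d i = 0 := by
    intro i
    have h0 : G.lapMatrix ℝ *ᵥ (fun _ => 1) = 0 := G.lapMatrix_mulVec_const_eq_zero
    have h := hrepr (fun _ => 1) i
    rw [h0] at h
    have hz0 : toE 0 = 0 := rfl
    rw [hz0, map_zero] at h
    simpa [hd] using h.symm
  have hevnn : ∀ i, 0 ≤ hL.eigenvalues i := fun i =>
    (SimpleGraph.posSemidef_lapMatrix ℝ G).eigenvalues_nonneg i
  have hqs : y ⬝ᵥ (G.lapMatrix ℝ *ᵥ y) = ∑ i, μ i * c (σ i) ^ 2 := by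
    rw [hquad, ← Equiv.sum_comp σ (fun j => hL.eigenvalues j * c j ^ 2)]
    simp [hμ]
  have hss : ∑ i, y i ^ 2 = ∑ i, c (σ i) ^ 2 := by
    rw [hsum_sq, ← Equiv.sum_comp σ (fun j => c j ^ 2)]
  have hos : ∑ i, d (σ i) * c (σ i) = 0 := by
    rw [Equiv.sum_comp σ (fun j => d j * c j)]; exact hone
  rw [hqs, hss]
  rcases le_or_gt (μ ⟨1, by omega⟩) 0 with hneg | hpos
  · have h1 : (0:ℝ) ≤ ∑ i, μ i * c (σ i) ^ 2 :=
      Finset.sum_nonneg fun i _ => mul_nonneg (by rw [hμ]; exact hevnn _) (sq_nonneg _)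
    have h2 : μ ⟨1, by omega⟩ * ∑ i, c (σ i) ^ 2 ≤ 0 :=
      mul_nonpos_of_nonpos_of_nonneg hneg (Finset.sum_nonneg fun i _ => sq_nonneg _)
    linarith
  · set i0 : Fin n := ⟨0, by omega⟩ with hi0
    set i1 : Fin n := ⟨1, by omega⟩ with hi1
    have hmu_le : ∀ i, i ≠ i0 → μ i1 ≤ μ i := by
      intro i h
      refine hmono ?_
      have hv : i.val ≠ 0 := fun hv => h (Fin.ext hv)
      exact Fin.mk_le_of_le_val (by omega)
    have hd0 : ∀ i, i ≠ i0 → d (σ i) = 0 := by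
      intro i h
      have h1 := hld (σ i)
      have h2 : 0 < μ i := lt_of_lt_of_le hpos (hmu_le i h)
      rw [hμ] at h2
      exact (mul_eq_zero.1 h1).resolve_left (ne_of_gt h2)
    have hdne : d (σ i0) ≠ 0 := by
      intro h0
      have hall : ∀ j, d j = 0 := by
        intro j
        rcases eq_or_ne (σ.symm j) i0 with h | h
        · rw [← Equiv.apply_symm_apply σ j, h]; exact h0
        · rw [← Equiv.apply_symm_apply σ j]; exact hd0 _ h
      have hzero : toE (fun _ => 1) = 0 := by
        apply hL.eigenvectorBasis.repr.injective
        rw [map_zero]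
        ext j
        have := hall j
        rw [hd] at this
        simpa using this
      have := congrArg (· i0) hzero
      simp [htoE] at this
    have hc0 : c (σ i0) = 0 := by
      have hsingle : ∑ i, d (σ i) * c (σ i) = d (σ i0) * c (σ i0) :=
        Finset.sum_eq_single i0 (fun i _ h => by rw [hd0 i h, zero_mul])
          (fun h => absurd (Finset.mem_univ i0) h)
      rw [hsingle] at hos
      exact (mul_eq_zero.1 hos).resolve_left hdne
    have hterm : ∀ i, 0 ≤ (μ i - μ i1) * c (σ i) ^ 2 := by
      intro i
      rcases eq_or_ne i i0 with rfl | h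
      · rw [hc0]; simp
      · exact mul_nonneg (sub_nonneg.2 (hmu_le i h)) (sq_nonneg _)
    have hsum := Finset.sum_nonneg fun i (_ : i ∈ Finset.univ) => hterm i
    rw [Finset.sum_congr rfl (fun i _ => by ring :
        ∀ i ∈ Finset.univ, (μ i - μ i1) * c (σ i) ^ 2
          = μ i * c (σ i) ^ 2 - μ i1 * c (σ i) ^ 2), Finset.sum_sub_distrib,
      ← Finset.mul_sum] at hsum
    have hi1eq : μ ⟨1, by omega⟩ = μ i1 := rfl
    linarith

lemma step_bound (n : ℕ) (hn : 2 ≤ n) (G : SimpleGraph (Fin n)) [DecidableRel G.Adj]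
    (hE : G.edgeFinset.Nonempty)
    (hL : (G.lapMatrix ℝ).IsHermitian)
    (μ : Fin n → ℝ) (hmono : Monotone μ) (σ : Equiv.Perm (Fin n))
    (hμ : μ = hL.eigenvalues ∘ σ)
    (y : Fin n → ℝ) (hy : ∑ i, y i = 0) :
    ∑ e ∈ G.edgeFinset, ∑ i, (gossip n e *ᵥ y) i ^ 2
      ≤ (G.edgeFinset.card : ℝ) * (1 - μ ⟨1, by omega⟩ / (2 * (G.edgeFinset.card : ℝ)))
          * ∑ i, y i ^ 2 := by
  classical
  have key : ∀ e ∈ G.edgeFinset, ∑ i, (gossip n e *ᵥ y) i ^ 2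
      = ∑ i, y i ^ 2 - (Sym2.lift ⟨fun p q => (y p - y q)^2, by intros; ring⟩ e) / 2 := by
    intro e he
    induction e using Sym2.ind with
    | _ p q =>
      have hadj : G.Adj p q := SimpleGraph.mem_edgeFinset.1 he
      rw [sum_sq_gossip n p q hadj.ne y, Sym2.lift_mk]
  rw [Finset.sum_congr rfl key, Finset.sum_sub_distrib, ← Finset.sum_div,
    edgeQ_sum n G y, Finset.sum_const, nsmul_eq_mul]
  have hspec := spectral_lb n hn G hL μ hmono σ hμ y hy
  have hm : (0:ℝ) < (G.edgeFinset.card : ℝ) := by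
    exact_mod_cast Finset.card_pos.2 hE
  have hrhs : (G.edgeFinset.card : ℝ) * (1 - μ ⟨1, by omega⟩ / (2 * (G.edgeFinset.card : ℝ)))
      * ∑ i, y i ^ 2
      = (G.edgeFinset.card : ℝ) * ∑ i, y i ^ 2 - (μ ⟨1, by omega⟩ * ∑ i, y i ^ 2) / 2 := by
    have hcancel : (G.edgeFinset.card : ℝ) * (μ ⟨1, by omega⟩ / (2 * (G.edgeFinset.card : ℝ)))
        = μ ⟨1, by omega⟩ / 2 := by
      rw [mul_div_assoc', mul_comm ((G.edgeFinset.card : ℝ)) (μ ⟨1, by omega⟩),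
        mul_comm (2:ℝ) ((G.edgeFinset.card : ℝ)),
        mul_comm (μ ⟨1, by omega⟩) ((G.edgeFinset.card : ℝ)),
        mul_div_mul_left _ _ (ne_of_gt hm)]
    calc (G.edgeFinset.card : ℝ) * (1 - μ ⟨1, by omega⟩ / (2 * (G.edgeFinset.card : ℝ)))
        * ∑ i, y i ^ 2
        = ((G.edgeFinset.card : ℝ)
            - (G.edgeFinset.card : ℝ) * (μ ⟨1, by omega⟩ / (2 * (G.edgeFinset.card : ℝ))))
            * ∑ i, y i ^ 2 := by rw [mul_sub, mul_one]
      _ = ((G.edgeFinset.card : ℝ) - μ ⟨1, by omega⟩ / 2) * ∑ i, y i ^ 2 := by rw [hcancel]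
      _ = (G.edgeFinset.card : ℝ) * ∑ i, y i ^ 2 - (μ ⟨1, by omega⟩ * ∑ i, y i ^ 2) / 2 := by
          ring
  rw [hrhs]
  linarith

lemma iter_bound (n : ℕ) (hn : 2 ≤ n) (G : SimpleGraph (Fin n)) [DecidableRel G.Adj]
    (hE : G.edgeFinset.Nonempty)
    (hL : (G.lapMatrix ℝ).IsHermitian)
    (μ : Fin n → ℝ) (hmono : Monotone μ) (σ : Equiv.Perm (Fin n))
    (hμ : μ = hL.eigenvalues ∘ σ) (R : ℕ) :
    ∀ y : Fin n → ℝ, (∑ i, y i = 0) →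
    ∑ f ∈ Fintype.piFinset (fun _ : Fin R => G.edgeFinset),
        (∑ i, (((List.ofFn fun r => gossip n (f r)).reverse.prod) *ᵥ y) i ^ 2)
      ≤ ((G.edgeFinset.card : ℝ)
          * (1 - μ ⟨1, by omega⟩ / (2 * (G.edgeFinset.card : ℝ)))) ^ R * ∑ i, y i ^ 2 := by
  classical
  have hm : (0:ℝ) < (G.edgeFinset.card : ℝ) := by
    exact_mod_cast Finset.card_pos.2 hE
  -- nonnegativity of the contraction factor
  have hK : 0 ≤ (G.edgeFinset.card : ℝ)
      * (1 - μ ⟨1, by omega⟩ / (2 * (G.edgeFinset.card : ℝ))) := by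
    set v0 : Fin n := ⟨0, by omega⟩
    set v1 : Fin n := ⟨1, by omega⟩
    have hv : v0 ≠ v1 := by simp [v0, v1, Fin.ext_iff]
    set y0 : Fin n → ℝ := Pi.single v0 1 - Pi.single v1 1 with hy0
    have hsum0 : ∑ i, y0 i = 0 := by
      simp [hy0, Finset.sum_sub_distrib, Pi.single_apply]
    have hsq0 : ∑ i, y0 i ^ 2 = 2 := by
      have h : ∀ i, (y0 i)^2 = (if i = v0 then (1:ℝ) else 0) + (if i = v1 then 1 else 0) := by
        intro i
        have hyi : y0 i = (if i = v0 then (1:ℝ) else 0) - (if i = v1 then 1 else 0) := by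
          simp [hy0, Pi.single_apply]
        rw [hyi]
        by_cases hip : i = v0 <;> by_cases hiq : i = v1
        · exact absurd (hip.symm.trans hiq) hv
        all_goals norm_num [hip, hiq, hv, Ne.symm hv]
      rw [Finset.sum_congr rfl fun i _ => h i, Finset.sum_add_distrib]
      simp
      norm_num
    have hstep := step_bound n hn G hE hL μ hmono σ hμ y0 hsum0
    rw [hsq0] at hstep
    have hpos : (0:ℝ) ≤ ∑ e ∈ G.edgeFinset, ∑ i, (gossip n e *ᵥ y0) i ^ 2 :=
      Finset.sum_nonneg fun e _ => Finset.sum_nonneg fun i _ => sq_nonneg _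
    linarith
  induction R with
  | zero =>
    intro y hy
    have hconst : ∀ f ∈ Fintype.piFinset (fun _ : Fin 0 => G.edgeFinset),
        (∑ i, (((List.ofFn fun r => gossip n (f r)).reverse.prod) *ᵥ y) i ^ 2)
          = ∑ i, y i ^ 2 := by
      intro f _
      simp [Matrix.one_mulVec]
    rw [Finset.sum_congr rfl hconst, Finset.sum_const, nsmul_eq_mul]
    simp [Fintype.card_piFinset]
  | succ R ih =>
    intro y hy
    set K : ℝ := (G.edgeFinset.card : ℝ)
      * (1 - μ ⟨1, by omega⟩ / (2 * (G.edgeFinset.card : ℝ))) with hKdef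
    have hbij : ∑ f ∈ Fintype.piFinset (fun _ : Fin (R+1) => G.edgeFinset),
        (∑ i, (((List.ofFn fun r => gossip n (f r)).reverse.prod) *ᵥ y) i ^ 2)
        = ∑ p ∈ G.edgeFinset ×ˢ Fintype.piFinset (fun _ : Fin R => G.edgeFinset),
            (∑ i, (((List.ofFn fun r => gossip n (p.2 r)).reverse.prod)
              *ᵥ (gossip n p.1 *ᵥ y)) i ^ 2) := by
      refine Finset.sum_nbij' (fun f => (f 0, fun r => f r.succ))
        (fun p => Fin.cons p.1 p.2) ?_ ?_ ?_ ?_ ?_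
      · intro f hf
        simp only [Fintype.mem_piFinset] at hf
        simp only [Finset.mem_product, Fintype.mem_piFinset]
        exact ⟨hf 0, fun r => hf r.succ⟩
      · intro p hp
        simp only [Finset.mem_product, Fintype.mem_piFinset] at hp
        simp only [Fintype.mem_piFinset]
        intro r
        refine Fin.cases ?_ ?_ r
        · simpa using hp.1
        · intro j; simpa using hp.2 j
      · intro f hf
        ext r
        refine Fin.cases ?_ ?_ r <;> simp
      · intro p hp
        simp
      · intro f hf
        have hl : (List.ofFn fun r : Fin (R+1) => gossip n (f r))
            = gossip n (f 0) :: List.ofFn (fun r : Fin R => gossip n (f r.succ)) := by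
          rw [List.ofFn_succ]
        rw [hl, List.reverse_cons, List.prod_append, List.prod_singleton,
          ← Matrix.mulVec_mulVec]
    rw [hbij, Finset.sum_product]
    calc ∑ e ∈ G.edgeFinset, ∑ g ∈ Fintype.piFinset (fun _ : Fin R => G.edgeFinset),
          (∑ i, (((List.ofFn fun r => gossip n (g r)).reverse.prod)
            *ᵥ (gossip n e *ᵥ y)) i ^ 2)
        ≤ ∑ e ∈ G.edgeFinset, K ^ R * ∑ i, (gossip n e *ᵥ y) i ^ 2 := by
          refine Finset.sum_le_sum fun e he => ?_
          exact ih (gossip n e *ᵥ y) (by rw [sum_gossip_mulVec]; exact hy)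
      _ = K ^ R * ∑ e ∈ G.edgeFinset, ∑ i, (gossip n e *ᵥ y) i ^ 2 := by
          rw [Finset.mul_sum]
      _ ≤ K ^ R * (K * ∑ i, y i ^ 2) := by
          refine mul_le_mul_of_nonneg_left ?_ (pow_nonneg hK R)
          exact step_bound n hn G hE hL μ hmono σ hμ y hy
      _ = K ^ (R+1) * ∑ i, y i ^ 2 := by ring


/-- Let `G = (V, E)` be a finite simple graph with `|V| = n` and `E`
nonempty, `L` its unweighted Laplacian with eigenvalues `λ_1 ≤ λ_2 ≤ … ≤ λ_n` (a monotone
enumeration `μ` of the eigenvalues with multiplicity), and let `z ∈ ℝⁿ` with `𝟙ᵀz = 0`.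
Then for every `R ≥ 1`, averaging over all sequences `(e_1, …, e_R) ∈ E^R`,
`(1/|E|^R) Σ_{(e_1,…,e_R)} ‖W_{e_R} ⋯ W_{e_1} z‖₂² ≤ (1 − λ_2/(2|E|))^R ‖z‖₂²`:
randomized gossip contracts the expected squared deviation from consensus by a factor at
least `1 − λ_2/(2|E|)` per uniformly random gossip step. -/
theorem stmt_16 (n : ℕ) (hn : 2 ≤ n) (G : SimpleGraph (Fin n)) [DecidableRel G.Adj]
    (hE : G.edgeFinset.Nonempty)
    (hL : (G.lapMatrix ℝ).IsHermitian)
    (μ : Fin n → ℝ) (hmono : Monotone μ) (σ : Equiv.Perm (Fin n))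
    (hμ : μ = hL.eigenvalues ∘ σ)
    (z : Fin n → ℝ) (hz : ∑ i, z i = 0) (R : ℕ) (hR : 1 ≤ R) :
    (1 / (G.edgeFinset.card : ℝ) ^ R) *
        ∑ f ∈ Fintype.piFinset (fun _ : Fin R => G.edgeFinset),
          (∑ i, (((List.ofFn fun r => gossip n (f r)).reverse.prod) *ᵥ z) i ^ 2)
      ≤ (1 - μ ⟨1, by omega⟩ / (2 * (G.edgeFinset.card : ℝ))) ^ R * ∑ i, z i ^ 2 := by
  have hm : (0:ℝ) < (G.edgeFinset.card : ℝ) := by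
    exact_mod_cast Finset.card_pos.2 hE
  have hiter := iter_bound n hn G hE hL μ hmono σ hμ R z hz
  have h1 : (0:ℝ) ≤ 1 / (G.edgeFinset.card : ℝ) ^ R := by positivity
  calc (1 / (G.edgeFinset.card : ℝ) ^ R) *
        ∑ f ∈ Fintype.piFinset (fun _ : Fin R => G.edgeFinset),
          (∑ i, (((List.ofFn fun r => gossip n (f r)).reverse.prod) *ᵥ z) i ^ 2)
      ≤ (1 / (G.edgeFinset.card : ℝ) ^ R) *
          (((G.edgeFinset.card : ℝ)
            * (1 - μ ⟨1, by omega⟩ / (2 * (G.edgeFinset.card : ℝ)))) ^ R * ∑ i, z i ^ 2) :=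
        mul_le_mul_of_nonneg_left hiter h1
    _ = (1 - μ ⟨1, by omega⟩ / (2 * (G.edgeFinset.card : ℝ))) ^ R * ∑ i, z i ^ 2 := by
        rw [mul_pow, one_div, ← mul_assoc, ← mul_assoc,
          inv_mul_cancel₀ (pow_ne_zero _ (ne_of_gt hm)), one_mul]
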